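/- arXiv:1005.2551 — 2 statements merged into one kernel-verified Lean document; each statement's English description precedes it below -/
import Mathlib

section
/- If G is a finite pseudograph with connected components G₁,…,G_k, then the poset of tubings of G is isomorphic to the product of the posets of tubings of each Gᵢ with the poset of tubings of the edgeless graph on k nodes (equivalently, with the face poset of the (k−1)-simplex). -/
/-!
A tube of a disjoint union is connected, so it lies in a single component `Gᵢ`: it is either a
tube of `Gᵢ` or all of `Gᵢ`. The latter is a proper subgraph exactly when there is a second
component, i.e. exactly when the node `i` is a tube of the edgeless graph on `k` nodes. Tubes in
different components are always compatible, and inside one component compatibility is that of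
`Gᵢ`, the whole component being compatible with everything it contains. Hence a tubing splits
into a tubing of each `Gᵢ` and the set of whole components it contains, which is a tubing of the
edgeless graph because not all components are included.
-/

/-- A pseudograph: finite-or-infinite multigraph with loops allowed,
    given by an endpoint map from edges to unordered pairs of vertices. -/
structure Pseudograph (V E : Type) where
  ends : E → Sym2 V

/-- A (not necessarily well-formed) subgraph datum: a set of vertices and a set of edges. -/
structure Piece (V E : Type) where
  verts : Set V
  edges : Set E

/-- Containment of subgraph data. -/
def Piece.Sub {V E : Type} (H K : Piece V E) : Prop :=
  H.verts ⊆ K.verts ∧ H.edges ⊆ K.edges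

namespace Pseudograph

variable {V E : Type}

/-- The whole graph, as a piece. -/
def wholePiece : Piece V E := ⟨Set.univ, Set.univ⟩

/-- Adjacency using only edges of the piece `H`. -/
def adjIn (G : Pseudograph V E) (H : Piece V E) (u w : V) : Prop :=
  ∃ e ∈ H.edges, G.ends e = s(u, w)

/-- The piece `H` is connected: nonempty vertex set, all vertices joined by walks in `H`. -/
def ConnectedPiece (G : Pseudograph V E) (H : Piece V E) : Prop :=
  H.verts.Nonempty ∧
    ∀ u ∈ H.verts, ∀ w ∈ H.verts, Relation.ReflTransGen (G.adjIn H) u w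

/-- A tube: a proper connected subgraph containing at least one edge between
    every pair of its nodes whenever `G` has such an edge. -/
def IsTube (G : Pseudograph V E) (H : Piece V E) : Prop :=
  (∀ e ∈ H.edges, ∀ v, v ∈ G.ends e → v ∈ H.verts) ∧
  G.ConnectedPiece H ∧
  H ≠ wholePiece ∧
  (∀ u ∈ H.verts, ∀ w ∈ H.verts, u ≠ w → (∃ e, G.ends e = s(u, w)) →
    ∃ e ∈ H.edges, G.ends e = s(u, w))

/-- Compatibility of tubes: one properly contains the other, or they are disjoint
    and cannot be connected by a single edge of `G`. -/
def Compatible (G : Pseudograph V E) (H K : Piece V E) : Prop :=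
  (H.Sub K ∧ H ≠ K) ∨ (K.Sub H ∧ K ≠ H) ∨
  (Disjoint H.verts K.verts ∧
    ¬ ∃ e, ∃ u ∈ H.verts, ∃ w ∈ K.verts, G.ends e = s(u, w))

/-- Adjacency in the whole graph. -/
def adj (G : Pseudograph V E) (u w : V) : Prop := ∃ e, G.ends e = s(u, w)

/-- The connected component of `v`, as a piece. -/
def compPiece (G : Pseudograph V E) (v : V) : Piece V E :=
  ⟨{u | Relation.ReflTransGen G.adj v u},
   {e | ∀ u, u ∈ G.ends e → Relation.ReflTransGen G.adj v u}⟩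

/-- A tubing: a set of pairwise compatible tubes not containing all component tubes. -/
def IsTubing (G : Pseudograph V E) (𝒯 : Set (Piece V E)) : Prop :=
  (∀ H ∈ 𝒯, G.IsTube H) ∧
  (∀ H ∈ 𝒯, ∀ K ∈ 𝒯, H ≠ K → G.Compatible H K) ∧
  ¬ ∀ v : V, G.compPiece v ∈ 𝒯

/-- The poset of tubings of `G`, ordered by reverse inclusion. -/
def Tubing (G : Pseudograph V E) := {𝒯 : Set (Piece V E) // G.IsTubing 𝒯}

instance (G : Pseudograph V E) : PartialOrder (G.Tubing) where
  le T T' := T'.1 ⊆ T.1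
  le_refl T := subset_rfl
  le_trans T₁ T₂ T₃ h h' := fun x hx => h (h' hx)
  le_antisymm T₁ T₂ h h' := Subtype.ext (subset_antisymm h' h)

end Pseudograph

namespace Pseudograph

variable {V E : Type}


/-- `G` is a connected pseudograph. -/
def ConnectedGraph (G : Pseudograph V E) : Prop :=
  Nonempty V ∧ ∀ u w : V, Relation.ReflTransGen G.adj u w

/-- The edgeless graph on `k` nodes. -/
def edgeless (k : ℕ) : Pseudograph (Fin k) Empty := ⟨fun e => e.elim⟩

/-- Disjoint union of a family of pseudographs. -/
def sigmaGraph {ι : Type} {Vc Ec : ι → Type} (Gc : ∀ i, Pseudograph (Vc i) (Ec i)) :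
    Pseudograph ((i : ι) × Vc i) ((i : ι) × Ec i) :=
  ⟨fun e => ((Gc e.1).ends e.2).map fun v => ⟨e.1, v⟩⟩

end Pseudograph

namespace Relation

theorem reflTransGen_map_iff_of_step_iff {α β : Type*} {r : β → β → Prop} {s : α → α → Prop}
    {f : α → β} (hf : Function.Injective f) (hstep : ∀ a q, r (f a) q ↔ ∃ b, q = f b ∧ s a b)
    {a b : α} : ReflTransGen r (f a) (f b) ↔ ReflTransGen s a b := by
  refine ⟨fun h => ?_, ReflTransGen.lift f (fun a b hab => (hstep a _).2 ⟨b, rfl, hab⟩) _ _⟩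
  suffices ∀ q, ReflTransGen r (f a) q → ∃ c, q = f c ∧ ReflTransGen s a c by
    obtain ⟨c, hc, hac⟩ := this _ h
    exact hf hc ▸ hac
  intro q hq
  induction hq with
  | refl => exact ⟨a, rfl, .refl⟩
  | tail _ hrq ih =>
    obtain ⟨c, rfl, hac⟩ := ih
    obtain ⟨d, rfl, hcd⟩ := (hstep c _).1 hrq
    exact ⟨d, rfl, hac.tail hcd⟩

end Relation

attribute [ext] Piece

namespace Piece

variable {V E : Type}

def singleton (v : V) : Piece V E := ⟨{v}, ∅⟩

theorem singleton_injective : Function.Injective (singleton : V → Piece V E) :=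
  fun _ _ h => Set.singleton_injective (congrArg Piece.verts h)

variable {ι : Type} {Vc Ec : ι → Type}

@[simps]
def sigmaMk (i : ι) (H : Piece (Vc i) (Ec i)) : Piece (Sigma Vc) (Sigma Ec) :=
  ⟨Sigma.mk i '' H.verts, Sigma.mk i '' H.edges⟩

def sigmaFiber (i : ι) (P : Piece (Sigma Vc) (Sigma Ec)) : Piece (Vc i) (Ec i) :=
  ⟨Sigma.mk i ⁻¹' P.verts, Sigma.mk i ⁻¹' P.edges⟩

theorem sigmaMk_injective (i : ι) : Function.Injective (sigmaMk (Vc := Vc) (Ec := Ec) i) :=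
  fun _ _ h => Piece.ext (Set.image_injective.2 sigma_mk_injective (congrArg verts h))
    (Set.image_injective.2 sigma_mk_injective (congrArg edges h))

theorem fst_eq_of_sigmaMk_eq {i j : ι} {H : Piece (Vc i) (Ec i)} {K : Piece (Vc j) (Ec j)}
    (h : sigmaMk i H = sigmaMk j K) (hH : H.verts.Nonempty) : i = j := by
  obtain ⟨x, hx⟩ := hH
  obtain ⟨y, -, hy⟩ : (⟨i, x⟩ : Sigma Vc) ∈ (sigmaMk j K).verts := h ▸ ⟨x, hx, rfl⟩
  exact congrArg Sigma.fst hy.symm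

theorem sigmaMk_sub_sigmaMk_iff {i : ι} {H K : Piece (Vc i) (Ec i)} :
    (sigmaMk i H).Sub (sigmaMk i K) ↔ H.Sub K := by
  simp only [Sub, sigmaMk_verts, sigmaMk_edges, Set.image_subset_image_iff sigma_mk_injective]

theorem sigmaMk_sigmaFiber {i : ι} {P : Piece (Sigma Vc) (Sigma Ec)}
    (hv : ∀ q ∈ P.verts, q.1 = i) (he : ∀ e ∈ P.edges, e.1 = i) :
    sigmaMk i (sigmaFiber i P) = P := by
  ext1
  · exact Set.image_preimage_eq_of_subset fun q hq => (Set.range_sigmaMk i).symm ▸ hv q hq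
  · exact Set.image_preimage_eq_of_subset fun e he' => (Set.range_sigmaMk i).symm ▸ he e he'

end Piece

namespace Pseudograph

open Relation Piece

section General

variable {V E : Type} (G : Pseudograph V E)

def IsFullConnectedPiece (H : Piece V E) : Prop :=
  (∀ e ∈ H.edges, ∀ v, v ∈ G.ends e → v ∈ H.verts) ∧
  G.ConnectedPiece H ∧
  ∀ u ∈ H.verts, ∀ w ∈ H.verts, u ≠ w → G.adj u w → G.adjIn H u w

variable {G} {H K : Piece V E}

theorem isTube_iff : G.IsTube H ↔ G.IsFullConnectedPiece H ∧ H ≠ wholePiece :=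
  ⟨fun ⟨hcl, hc, hne, hfull⟩ => ⟨⟨hcl, hc, hfull⟩, hne⟩,
    fun ⟨⟨hcl, hc, hfull⟩, hne⟩ => ⟨hcl, hc, hne, hfull⟩⟩

theorem IsTube.verts_nonempty (h : G.IsTube H) : H.verts.Nonempty := h.2.1.1

theorem IsTube.ne_wholePiece (h : G.IsTube H) : H ≠ wholePiece := h.2.2.1

theorem adjIn_le_adj : G.adjIn H ≤ G.adj := fun _ _ ⟨e, _, he⟩ => ⟨e, he⟩

theorem adjIn_wholePiece_iff {u w : V} : G.adjIn wholePiece u w ↔ G.adj u w :=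
  ⟨fun h => adjIn_le_adj _ _ h, fun ⟨e, he⟩ => ⟨e, trivial, he⟩⟩

theorem ConnectedGraph.compPiece_eq_wholePiece (h : G.ConnectedGraph) (v : V) :
    G.compPiece v = wholePiece := by
  ext u
  · exact iff_of_true (h.2 v u) trivial
  · exact iff_of_true (fun w _ => h.2 v w) trivial

theorem ConnectedGraph.isFullConnectedPiece_wholePiece (h : G.ConnectedGraph) :
    G.IsFullConnectedPiece wholePiece :=
  ⟨fun _ _ _ _ => trivial,
    ⟨⟨h.1.some, trivial⟩,
      fun u _ w _ => ReflTransGen.mono (fun _ _ => adjIn_wholePiece_iff.2) _ _ (h.2 u w)⟩,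
    fun _ _ _ _ _ => adjIn_wholePiece_iff.2⟩

theorem Compatible.symm (h : G.Compatible H K) : G.Compatible K H := by
  rcases h with h | h | ⟨hdisj, hnoedge⟩
  · exact Or.inr (Or.inl h)
  · exact Or.inl h
  · refine Or.inr (Or.inr ⟨hdisj.symm, ?_⟩)
    rintro ⟨e, u, hu, w, hw, he⟩
    exact hnoedge ⟨e, w, hw, u, hu, he.trans Sym2.eq_swap⟩

theorem compatible_wholePiece (h : H ≠ wholePiece) : G.Compatible H wholePiece :=
  Or.inl ⟨⟨Set.subset_univ _, Set.subset_univ _⟩, h⟩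

end General

section Edgeless

variable {V E : Type} [IsEmpty E] {G : Pseudograph V E} {H : Piece V E}

theorem reflTransGen_adjIn_iff_of_isEmpty {u w : V} : ReflTransGen (G.adjIn H) u w ↔ w = u :=
  reflTransGen_iff_eq fun _ ⟨e, _⟩ => isEmptyElim e

theorem compPiece_eq_singleton_of_isEmpty (v : V) : G.compPiece v = Piece.singleton v := by
  have hwalk : ∀ u, ReflTransGen G.adj v u ↔ u = v :=
    fun _ => reflTransGen_iff_eq fun _ ⟨e, _⟩ => isEmptyElim e
  ext1
  · exact Set.ext hwalk
  · exact Set.eq_empty_of_isEmpty _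

theorem isTube_singleton_iff_of_isEmpty {v : V} :
    G.IsTube (Piece.singleton v) ↔ ∃ w, w ≠ v := by
  refine ⟨fun h => ?_, fun ⟨w, hw⟩ => ⟨?_, ⟨⟨v, rfl⟩, ?_⟩, ?_, ?_⟩⟩
  · by_contra! hall
    exact h.ne_wholePiece (Piece.ext (Set.eq_univ_of_forall hall) (Subsingleton.elim _ _))
  · exact fun e => isEmptyElim e
  · rintro u rfl w' rfl
    exact .refl
  · exact fun h => hw (show w ∈ (Piece.singleton v : Piece V E).verts from h ▸ Set.mem_univ w)
  · exact fun _ _ _ _ _ ⟨e, _⟩ => isEmptyElim e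

theorem IsTube.eq_singleton_of_isEmpty (h : G.IsTube H) : ∃ v, H = Piece.singleton v := by
  obtain ⟨v, hv⟩ := h.verts_nonempty
  refine ⟨v, Piece.ext (Set.eq_singleton_iff_unique_mem.2 ⟨hv, fun w hw => ?_⟩)
    (Set.eq_empty_of_isEmpty _)⟩
  exact reflTransGen_adjIn_iff_of_isEmpty.1 (h.2.1.2 v hv w hw)

theorem compatible_singleton_of_isEmpty {v w : V} (h : v ≠ w) :
    G.Compatible (Piece.singleton v) (Piece.singleton w) :=
  Or.inr (Or.inr ⟨Set.disjoint_singleton.2 h, fun ⟨e, _⟩ => isEmptyElim e⟩)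

end Edgeless

section Sigma

variable {ι : Type} {Vc Ec : ι → Type} {Gc : ∀ i, Pseudograph (Vc i) (Ec i)}

theorem sigmaGraph_ends_mk (i : ι) (e : Ec i) :
    (sigmaGraph Gc).ends ⟨i, e⟩ = ((Gc i).ends e).map (Sigma.mk i) := rfl

theorem fst_eq_of_mem_sigmaGraph_ends {e : Sigma Ec} {p : Sigma Vc}
    (hp : p ∈ (sigmaGraph Gc).ends e) : p.1 = e.1 := by
  obtain ⟨a, -, rfl⟩ := Sym2.mem_map.1 hp
  rfl

theorem sigmaGraph_ends_mk_eq_iff {i : ι} {e : Ec i} {u w : Vc i} :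
    (sigmaGraph Gc).ends ⟨i, e⟩ = s(⟨i, u⟩, ⟨i, w⟩) ↔ (Gc i).ends e = s(u, w) :=
  (Sym2.map.injective sigma_mk_injective).eq_iff' (Sym2.map_mk _ _ _)

theorem sigmaGraph_ends_eq_iff {e : Sigma Ec} {i : ι} {u : Vc i} {q : Sigma Vc} :
    (sigmaGraph Gc).ends e = s(⟨i, u⟩, q) ↔
      ∃ e' w, e = ⟨i, e'⟩ ∧ q = ⟨i, w⟩ ∧ (Gc i).ends e' = s(u, w) := by
  refine ⟨fun h => ?_, fun ⟨e', w, he, hq, h⟩ => he ▸ hq ▸ sigmaGraph_ends_mk_eq_iff.2 h⟩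
  have hu := fst_eq_of_mem_sigmaGraph_ends (h ▸ Sym2.mem_mk_left _ q)
  have hq := fst_eq_of_mem_sigmaGraph_ends (h ▸ Sym2.mem_mk_right _ q)
  obtain ⟨j, e'⟩ := e
  obtain ⟨j', w⟩ := q
  obtain rfl : i = j := hu
  obtain rfl : j' = i := hq
  exact ⟨e', w, rfl, rfl, sigmaGraph_ends_mk_eq_iff.1 h⟩

theorem sigmaGraph_adj_mk_mk_iff {i : ι} {u w : Vc i} :
    (sigmaGraph Gc).adj ⟨i, u⟩ ⟨i, w⟩ ↔ (Gc i).adj u w := by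
  refine ⟨fun ⟨e, he⟩ => ?_, fun ⟨e, he⟩ => ⟨⟨i, e⟩, sigmaGraph_ends_mk_eq_iff.2 he⟩⟩
  obtain ⟨e', w', -, hw, he'⟩ := sigmaGraph_ends_eq_iff.1 he
  exact ⟨e', sigma_mk_injective hw ▸ he'⟩

theorem fst_eq_of_reflTransGen_sigmaGraph_adj {p q : Sigma Vc}
    (h : ReflTransGen (sigmaGraph Gc).adj p q) : p.1 = q.1 := by
  induction h with
  | refl => rfl
  | tail _ hadj ih =>
    obtain ⟨e, he⟩ := hadj
    exact ih.trans ((fst_eq_of_mem_sigmaGraph_ends (he ▸ Sym2.mem_mk_left _ _)).trans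
      (fst_eq_of_mem_sigmaGraph_ends (he ▸ Sym2.mem_mk_right _ _)).symm)

theorem sigmaGraph_adjIn_sigmaMk_iff {i : ι} {H : Piece (Vc i) (Ec i)} {u : Vc i}
    {q : Sigma Vc} :
    (sigmaGraph Gc).adjIn (sigmaMk i H) ⟨i, u⟩ q ↔ ∃ w, q = ⟨i, w⟩ ∧ (Gc i).adjIn H u w := by
  constructor
  · rintro ⟨e, ⟨e', he', rfl⟩, he⟩
    obtain ⟨e'', w, he'', rfl, h⟩ := sigmaGraph_ends_eq_iff.1 he
    exact ⟨w, rfl, e', he', sigma_mk_injective he'' ▸ h⟩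
  · rintro ⟨w, rfl, e, he, h⟩
    exact ⟨⟨i, e⟩, ⟨e, he, rfl⟩, sigmaGraph_ends_mk_eq_iff.2 h⟩

theorem reflTransGen_sigmaGraph_adjIn_sigmaMk_iff {i : ι} {H : Piece (Vc i) (Ec i)}
    {u w : Vc i} :
    ReflTransGen ((sigmaGraph Gc).adjIn (sigmaMk i H)) ⟨i, u⟩ ⟨i, w⟩ ↔
      ReflTransGen ((Gc i).adjIn H) u w :=
  reflTransGen_map_iff_of_step_iff sigma_mk_injective fun _ _ => sigmaGraph_adjIn_sigmaMk_iff

theorem sigmaGraph_adjIn_sigmaMk_mk_iff {i : ι} {H : Piece (Vc i) (Ec i)} {u w : Vc i} :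
    (sigmaGraph Gc).adjIn (sigmaMk i H) ⟨i, u⟩ ⟨i, w⟩ ↔ (Gc i).adjIn H u w := by
  rw [sigmaGraph_adjIn_sigmaMk_iff]
  exact ⟨fun ⟨w', hw, h⟩ => sigma_mk_injective hw ▸ h, fun h => ⟨w, rfl, h⟩⟩

theorem isFullConnectedPiece_sigmaMk_iff {i : ι} {H : Piece (Vc i) (Ec i)} :
    (sigmaGraph Gc).IsFullConnectedPiece (sigmaMk i H) ↔ (Gc i).IsFullConnectedPiece H := by
  simp only [IsFullConnectedPiece, ConnectedPiece, sigmaMk_verts, sigmaMk_edges,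
    Set.forall_mem_image, Set.image_nonempty, sigmaGraph_ends_mk, Sym2.mem_map,
    forall_exists_index, and_imp, sigma_mk_injective.ne_iff, sigmaGraph_adj_mk_mk_iff,
    sigmaGraph_adjIn_sigmaMk_mk_iff, reflTransGen_sigmaGraph_adjIn_sigmaMk_iff]
  refine and_congr_left' ⟨fun h e he v hv => sigma_mk_injective.mem_set_image.1 (h he _ v hv rfl),
    fun h e he _ v hv hq => hq ▸ ⟨v, h e he v hv, rfl⟩⟩

theorem IsFullConnectedPiece.exists_eq_sigmaMk {P : Piece (Sigma Vc) (Sigma Ec)}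
    (h : (sigmaGraph Gc).IsFullConnectedPiece P) : ∃ i A, P = sigmaMk i A := by
  obtain ⟨hclosed, ⟨⟨p, hp⟩, hconn⟩, -⟩ := h
  have hverts : ∀ q ∈ P.verts, q.1 = p.1 := fun q hq => (fst_eq_of_reflTransGen_sigmaGraph_adj
    (ReflTransGen.mono adjIn_le_adj _ _ (hconn p hp q hq))).symm
  have hedges : ∀ e ∈ P.edges, e.1 = p.1 := fun e he =>
    have hout := Sym2.out_fst_mem ((sigmaGraph Gc).ends e)
    (fst_eq_of_mem_sigmaGraph_ends hout).symm.trans (hverts _ (hclosed e he _ hout))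
  exact ⟨p.1, _, (sigmaMk_sigmaFiber hverts hedges).symm⟩

theorem sigmaMk_eq_wholePiece_iff (hne : ∀ j, Nonempty (Vc j)) {i : ι}
    {H : Piece (Vc i) (Ec i)} : sigmaMk i H = wholePiece ↔ H = wholePiece ∧ ∀ j, j = i := by
  constructor
  · intro h
    have hverts := Set.eq_univ_iff_forall.1 (congrArg Piece.verts h)
    have hedges := Set.eq_univ_iff_forall.1 (congrArg Piece.edges h)
    refine ⟨Piece.ext ?_ ?_, fun j => ?_⟩
    · exact Set.eq_univ_of_forall fun x => sigma_mk_injective.mem_set_image.1 (hverts ⟨i, x⟩)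
    · exact Set.eq_univ_of_forall fun e => sigma_mk_injective.mem_set_image.1 (hedges ⟨i, e⟩)
    · obtain ⟨y, -, hy⟩ := hverts ⟨j, (hne j).some⟩
      exact congrArg Sigma.fst hy.symm
  · rintro ⟨rfl, hi⟩
    ext ⟨j, x⟩ <;> obtain rfl := hi j <;> simp [wholePiece]

theorem isTube_sigmaMk_iff (hne : ∀ j, Nonempty (Vc j)) {i : ι} {H : Piece (Vc i) (Ec i)} :
    (sigmaGraph Gc).IsTube (sigmaMk i H) ↔
      (Gc i).IsFullConnectedPiece H ∧ (H ≠ wholePiece ∨ ∃ j, j ≠ i) := by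
  rw [isTube_iff, isFullConnectedPiece_sigmaMk_iff, Ne, sigmaMk_eq_wholePiece_iff hne,
    not_and_or, not_forall]

theorem compPiece_sigmaGraph {i : ι} (hi : (Gc i).ConnectedGraph) (x : Vc i) :
    (sigmaGraph Gc).compPiece ⟨i, x⟩ = sigmaMk i wholePiece := by
  have hwalk : ∀ q, ReflTransGen (sigmaGraph Gc).adj ⟨i, x⟩ q ↔ q.1 = i := by
    rintro ⟨j, y⟩
    refine ⟨fun h => (fst_eq_of_reflTransGen_sigmaGraph_adj h).symm, ?_⟩
    rintro (rfl : j = i)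
    exact ReflTransGen.lift _ (fun _ _ h => sigmaGraph_adj_mk_mk_iff.2 h) _ _ (hi.2 x y)
  ext q
  · simp [compPiece, wholePiece, hwalk, Set.range_sigmaMk]
  · simp only [compPiece, wholePiece, sigmaMk_edges, Set.image_univ, Set.range_sigmaMk,
      Set.mem_ofPred_eq, Set.mem_preimage, Set.mem_singleton_iff, hwalk]
    refine ⟨fun h => ?_, fun h u hu => (fst_eq_of_mem_sigmaGraph_ends hu).trans h⟩
    have hout := Sym2.out_fst_mem ((sigmaGraph Gc).ends q)
    exact (fst_eq_of_mem_sigmaGraph_ends hout).symm.trans (h _ hout)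

theorem compatible_sigmaMk_of_ne {i j : ι} (hij : i ≠ j) (H : Piece (Vc i) (Ec i))
    (K : Piece (Vc j) (Ec j)) : (sigmaGraph Gc).Compatible (sigmaMk i H) (sigmaMk j K) := by
  refine Or.inr (Or.inr ⟨?_, ?_⟩)
  · rw [Set.disjoint_left]
    rintro _ ⟨x, -, rfl⟩ ⟨y, -, hy⟩
    exact hij (congrArg Sigma.fst hy).symm
  · rintro ⟨e, u, ⟨x, -, rfl⟩, w, ⟨y, -, rfl⟩, he⟩
    obtain ⟨_, _, -, hw, -⟩ := sigmaGraph_ends_eq_iff.1 he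
    exact hij (congrArg Sigma.fst hw).symm

theorem compatible_sigmaMk_iff {i : ι} {H K : Piece (Vc i) (Ec i)} :
    (sigmaGraph Gc).Compatible (sigmaMk i H) (sigmaMk i K) ↔ (Gc i).Compatible H K := by
  have hedge : (∃ e, ∃ u ∈ (sigmaMk i H).verts, ∃ w ∈ (sigmaMk i K).verts,
      (sigmaGraph Gc).ends e = s(u, w)) ↔
        ∃ e, ∃ u ∈ H.verts, ∃ w ∈ K.verts, (Gc i).ends e = s(u, w) := by
    simp only [sigmaMk_verts, Set.exists_mem_image]
    constructor
    · rintro ⟨e, u, hu, w, hw, he⟩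
      obtain ⟨e', w', -, hw', he'⟩ := sigmaGraph_ends_eq_iff.1 he
      exact ⟨e', u, hu, w, hw, sigma_mk_injective hw' ▸ he'⟩
    · rintro ⟨e, u, hu, w, hw, he⟩
      exact ⟨⟨i, e⟩, u, hu, w, hw, sigmaGraph_ends_mk_eq_iff.2 he⟩
  rw [Compatible, Compatible, sigmaMk_sub_sigmaMk_iff, sigmaMk_sub_sigmaMk_iff,
    (sigmaMk_injective i).ne_iff, (sigmaMk_injective i).ne_iff, hedge, sigmaMk_verts,
    sigmaMk_verts, Set.disjoint_image_iff sigma_mk_injective]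

end Sigma

section Tubings

variable {k : ℕ} {Vc Ec : Fin k → Type} {Gc : ∀ i, Pseudograph (Vc i) (Ec i)}

variable (Gc) in
def componentTubes (S : Set (Piece (Sigma Vc) (Sigma Ec))) (i : Fin k) :
    Set (Piece (Vc i) (Ec i)) :=
  {H | (Gc i).IsTube H ∧ sigmaMk i H ∈ S}

def componentSingletons (S : Set (Piece (Sigma Vc) (Sigma Ec))) :
    Set (Piece (Fin k) Empty) :=
  Piece.singleton '' {i | sigmaMk i wholePiece ∈ S}

def glueTubes (T : ∀ i, Set (Piece (Vc i) (Ec i))) (U : Set (Piece (Fin k) Empty)) :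
    Set (Piece (Sigma Vc) (Sigma Ec)) :=
  {P | ∃ i A, (A ∈ T i ∨ A = wholePiece ∧ Piece.singleton i ∈ U) ∧ sigmaMk i A = P}

theorem isTubing_componentTubes {S : Set (Piece (Sigma Vc) (Sigma Ec))}
    {i : Fin k} (hi : (Gc i).ConnectedGraph) (hS : (sigmaGraph Gc).IsTubing S) :
    (Gc i).IsTubing (componentTubes Gc S i) :=
  ⟨fun _ hH => hH.1,
    fun _ hH _ hK hne =>
      compatible_sigmaMk_iff.1 (hS.2.1 _ hH.2 _ hK.2 ((sigmaMk_injective i).ne hne)),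
    fun hall => (hall hi.1.some).1.ne_wholePiece (hi.compPiece_eq_wholePiece _)⟩

theorem isTubing_componentSingletons (hconn : ∀ i, (Gc i).ConnectedGraph)
    {S : Set (Piece (Sigma Vc) (Sigma Ec))}
    (hS : (sigmaGraph Gc).IsTubing S) : (edgeless k).IsTubing (componentSingletons S) := by
  refine ⟨?_, ?_, fun hall => hS.2.2 ?_⟩
  · rintro _ ⟨i, hi, rfl⟩
    have hcomp := ((isTube_sigmaMk_iff fun j => (hconn j).1).1 (hS.1 _ hi)).2
    exact isTube_singleton_iff_of_isEmpty.2 (hcomp.resolve_left (not_not.2 rfl))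
  · rintro _ ⟨i, -, rfl⟩ _ ⟨j, -, rfl⟩ hne
    exact compatible_singleton_of_isEmpty fun h => hne (h ▸ rfl)
  · rintro ⟨i, x⟩
    obtain ⟨j, hj, hji⟩ := compPiece_eq_singleton_of_isEmpty (G := edgeless k) i ▸ hall i
    rw [compPiece_sigmaGraph (hconn i), ← Piece.singleton_injective hji]
    exact hj

theorem isTubing_glueTubes (hconn : ∀ i, (Gc i).ConnectedGraph)
    {T : ∀ i, Set (Piece (Vc i) (Ec i))} {U : Set (Piece (Fin k) Empty)}
    (hT : ∀ i, (Gc i).IsTubing (T i)) (hU : (edgeless k).IsTubing U) :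
    (sigmaGraph Gc).IsTubing (glueTubes T U) := by
  refine ⟨?_, ?_, fun hall => hU.2.2 fun i => ?_⟩
  · rintro _ ⟨i, A, hA, rfl⟩
    rw [isTube_sigmaMk_iff fun j => (hconn j).1]
    rcases hA with hA | ⟨rfl, hiU⟩
    · exact (isTube_iff.1 ((hT i).1 A hA)).imp_right Or.inl
    · exact ⟨(hconn i).isFullConnectedPiece_wholePiece,
        Or.inr (isTube_singleton_iff_of_isEmpty.1 (hU.1 _ hiU))⟩
  · rintro _ ⟨i, A, hA, rfl⟩ _ ⟨j, B, hB, rfl⟩ hne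
    by_cases hij : i = j
    · subst hij
      have hAB : A ≠ B := fun h => hne (h ▸ rfl)
      rw [compatible_sigmaMk_iff]
      rcases hA with hA | ⟨rfl, -⟩ <;> rcases hB with hB | ⟨rfl, -⟩
      · exact (hT i).2.1 A hA B hB hAB
      · exact compatible_wholePiece ((hT i).1 A hA).ne_wholePiece
      · exact (compatible_wholePiece ((hT i).1 B hB).ne_wholePiece).symm
      · exact absurd rfl hAB
    · exact compatible_sigmaMk_of_ne hij A B
  · obtain ⟨x⟩ := (hconn i).1
    obtain ⟨j, A, hA, hAi⟩ := compPiece_sigmaGraph (hconn i) x ▸ hall ⟨i, x⟩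
    obtain rfl := fst_eq_of_sigmaMk_eq hAi.symm ⟨x, trivial⟩
    obtain rfl := sigmaMk_injective _ hAi
    rw [compPiece_eq_singleton_of_isEmpty]
    exact (hA.resolve_left fun h => ((hT i).1 _ h).ne_wholePiece rfl).2

theorem glueTubes_componentTubes {S : Set (Piece (Sigma Vc) (Sigma Ec))}
    (hS : ∀ P ∈ S, (sigmaGraph Gc).IsTube P) :
    glueTubes (componentTubes Gc S) (componentSingletons S) = S := by
  ext P
  constructor
  · rintro ⟨i, A, hA | ⟨rfl, j, hj, hji⟩, rfl⟩
    · exact hA.2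
    · exact Piece.singleton_injective hji ▸ hj
  · intro hP
    obtain ⟨hfull, -⟩ := isTube_iff.1 (hS P hP)
    obtain ⟨i, A, rfl⟩ := hfull.exists_eq_sigmaMk
    by_cases hA : A = wholePiece
    · subst hA
      exact ⟨i, _, Or.inr ⟨rfl, i, hP, rfl⟩, rfl⟩
    · exact ⟨i, A, Or.inl ⟨isTube_iff.2 ⟨isFullConnectedPiece_sigmaMk_iff.1 hfull, hA⟩, hP⟩, rfl⟩

theorem componentTubes_glueTubes {T : ∀ i, Set (Piece (Vc i) (Ec i))}
    {U : Set (Piece (Fin k) Empty)} (hT : ∀ i, ∀ A ∈ T i, (Gc i).IsTube A) (i : Fin k) :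
    componentTubes Gc (glueTubes T U) i = T i := by
  ext H
  constructor
  · rintro ⟨hH, j, A, hA, hAH⟩
    obtain rfl := fst_eq_of_sigmaMk_eq hAH.symm hH.verts_nonempty
    obtain rfl := sigmaMk_injective _ hAH
    exact hA.resolve_right fun h => hH.ne_wholePiece h.1
  · exact fun hH => ⟨hT i H hH, i, H, Or.inl hH, rfl⟩

theorem componentSingletons_glueTubes (hne : ∀ i, Nonempty (Vc i))
    {T : ∀ i, Set (Piece (Vc i) (Ec i))} {U : Set (Piece (Fin k) Empty)}
    (hT : ∀ i, ∀ A ∈ T i, (Gc i).IsTube A) (hU : ∀ P ∈ U, (edgeless k).IsTube P) :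
    componentSingletons (glueTubes T U) = U := by
  ext P
  constructor
  · rintro ⟨i, ⟨j, A, hA, hAi⟩, rfl⟩
    obtain rfl := fst_eq_of_sigmaMk_eq hAi.symm ⟨(hne i).some, trivial⟩
    obtain rfl := sigmaMk_injective _ hAi
    exact (hA.resolve_left fun h => (hT _ _ h).ne_wholePiece rfl).2
  · intro hP
    obtain ⟨i, rfl⟩ := (hU P hP).eq_singleton_of_isEmpty
    exact ⟨i, ⟨i, _, Or.inr ⟨rfl, hP⟩, rfl⟩, rfl⟩

def tubingEquiv (hconn : ∀ i, (Gc i).ConnectedGraph) :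
    (sigmaGraph Gc).Tubing ≃ (∀ i, (Gc i).Tubing) × (edgeless k).Tubing where
  toFun T := (fun i => ⟨componentTubes Gc T.1 i, isTubing_componentTubes (hconn i) T.2⟩,
    ⟨componentSingletons T.1, isTubing_componentSingletons hconn T.2⟩)
  invFun TU := ⟨glueTubes (fun i => (TU.1 i).1) TU.2.1,
    isTubing_glueTubes hconn (fun i => (TU.1 i).2) TU.2.2⟩
  left_inv T := Subtype.ext (glueTubes_componentTubes T.2.1)
  right_inv TU := Prod.ext
    (funext fun i => Subtype.ext (componentTubes_glueTubes (fun i => (TU.1 i).2.1) i))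
    (Subtype.ext (componentSingletons_glueTubes (fun i => (hconn i).1)
      (fun i => (TU.1 i).2.1) TU.2.2.1))

end Tubings

/-- If `G` is a pseudograph with connected components `G₁, …, G_k`, then the poset of
tubings of `G` is isomorphic to the product of the posets of tubings of the `Gᵢ`
with the poset of tubings of the edgeless graph on `k` nodes. -/
theorem tubing_poset_of_disconnected {k : ℕ} {Vc Ec : Fin k → Type}
    (Gc : ∀ i, Pseudograph (Vc i) (Ec i))
    (hconn : ∀ i, (Gc i).ConnectedGraph) :
    Nonempty ((sigmaGraph Gc).Tubing ≃o
      ((∀ i, (Gc i).Tubing) × (edgeless k).Tubing)) := by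
  refine ⟨(tubingEquiv hconn).toOrderIso ?_ ?_⟩
  · exact fun T T' h => ⟨fun i H hH => ⟨hH.1, h hH.2⟩, Set.image_mono fun i hi => h hi⟩
  · rintro ⟨T, U⟩ ⟨T', U'⟩ ⟨hT, hU⟩ P ⟨i, A, hA, rfl⟩
    exact ⟨i, A, hA.imp (fun h => hT i h) (And.imp_right fun h => hU h), rfl⟩

end Pseudograph
end

section
/- Let G be a pseudograph and suppose tubes G_a and G_b are bundle compatible, adjacent or properly intersecting, with intersection a disjoint set of tubes {G_{∧_i}} and with G_∨ a minimal tube containing both. If |V(∨)| > max(|V(a)|,|V(b)|) then, with Λ(G_t) = c^{|V(t)|} + Σ_i c^{|E(i,t)|} + |G−G_t|² and c = |G|², one has Λ(G_a) + Λ(G_b) < Λ(G_∨) + Σ_i Λ(G_{∧_i}). -/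
namespace Pseudograph

variable {V E : Type}


/-- The number of nodes and edges of a piece. -/
noncomputable def pieceSize (H : Piece V E) : ℕ := H.verts.ncard + H.edges.ncard

/-- The constant `c = |G|²` of the realization, where `|G|` is the total number of
nodes and edges of `G`. -/
def cconst (G : Pseudograph V E) [Fintype V] [Fintype E] : ℤ :=
  ((Fintype.card V + Fintype.card E : ℕ) : ℤ) ^ 2

/-- `|G - G_t| = |G| - |G_t|`. -/
noncomputable def gap (G : Pseudograph V E) [Fintype V] [Fintype E] (H : Piece V E) : ℤ :=
  ((Fintype.card V + Fintype.card E : ℕ) : ℤ) - (pieceSize H : ℤ)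

/-- `Λ(G_t) = c^{|V(t)|} + Σ_i c^{|E(i,t)|} + |G - G_t|²`, the sum running over the
bundles of `G` (the unordered pairs attained by the endpoint map). -/
noncomputable def lam (G : Pseudograph V E) [Fintype V] [Fintype E] (H : Piece V E) : ℤ :=
  G.cconst ^ H.verts.ncard +
  (∑ᶠ p ∈ {p : Sym2 V | ∃ e, G.ends e = p},
    G.cconst ^ {e | e ∈ H.edges ∧ G.ends e = p}.ncard) +
  (G.gap H) ^ 2

/-- The sum of the values of `f` over the nodes and edges of a piece. -/
noncomputable def sumP (f : V ⊕ E → ℤ) (H : Piece V E) : ℤ :=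
  (∑ᶠ v ∈ H.verts, f (Sum.inl v)) + ∑ᶠ e ∈ H.edges, f (Sum.inr e)

/-- A maximal tubing. -/
def IsMaximalTubing (G : Pseudograph V E) (𝒯 : Set (Piece V E)) : Prop :=
  G.IsTubing 𝒯 ∧ ∀ 𝒯', G.IsTubing 𝒯' → 𝒯 ⊆ 𝒯' → 𝒯' = 𝒯

lemma pow_add_pow_add_lt_pow {N : ℤ} (hN : 2 ≤ N) {x y n : ℕ} (hn : 2 ≤ n) (hxn : x < n)
    (hyn : y < n) : (N ^ 2) ^ x + (N ^ 2) ^ y + 2 * (N - 1) ^ 2 + N < (N ^ 2) ^ n := by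
  have hc : 1 ≤ N ^ 2 := by nlinarith
  have hx : (N ^ 2) ^ x ≤ (N ^ 2) ^ (n - 1) := pow_le_pow_right₀ hc (by omega)
  have hy : (N ^ 2) ^ y ≤ (N ^ 2) ^ (n - 1) := pow_le_pow_right₀ hc (by omega)
  have h1 : N ^ 2 ≤ (N ^ 2) ^ (n - 1) := le_self_pow₀ hc (by omega)
  have hsucc : (N ^ 2) ^ n = (N ^ 2) ^ (n - 1) * N ^ 2 := by
    rw [← pow_succ, Nat.sub_add_cancel (by omega)]
  nlinarith

lemma pieceSize_le [Fintype V] [Fintype E] (H : Piece V E) :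
    pieceSize H ≤ Fintype.card V + Fintype.card E :=
  add_le_add ((Set.ncard_le_card _).trans_eq Nat.card_eq_fintype_card)
    ((Set.ncard_le_card _).trans_eq Nat.card_eq_fintype_card)

lemma sq_gap_le [Fintype V] [Fintype E] (G : Pseudograph V E) {H : Piece V E}
    (hH : H.verts.Nonempty) :
    G.gap H ^ 2 ≤ (((Fintype.card V + Fintype.card E : ℕ) : ℤ) - 1) ^ 2 := by
  have hpos : 0 < H.verts.ncard := (Set.ncard_pos (Set.toFinite _)).mpr hH
  have hle : (pieceSize H : ℤ) ≤ (Fintype.card V + Fintype.card E : ℕ) := by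
    exact_mod_cast pieceSize_le H
  have hpos' : (1 : ℤ) ≤ pieceSize H := by unfold pieceSize; omega
  exact pow_le_pow_left₀ (by unfold gap; omega) (by unfold gap; omega) 2

lemma ncard_bundles_le [Fintype E] (G : Pseudograph V E) :
    {p | ∃ e, G.ends e = p}.ncard ≤ Fintype.card E := by
  have h := Set.ncard_image_le (f := G.ends) (Set.toFinite (Set.univ : Set E))
  rwa [Set.image_univ, Set.ncard_univ, Nat.card_eq_fintype_card] at h

section Bundles

variable (G : Pseudograph V E)

/-- `E(i, t)`, for the bundle `p` and the piece `H`. -/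
def bundleEdges (H : Piece V E) (p : Sym2 V) : Set E := {e | e ∈ H.edges ∧ G.ends e = p}

lemma bundleEdges_mono {H K : Piece V E} (h : H.edges ⊆ K.edges) (p : Sym2 V) :
    G.bundleEdges H p ⊆ G.bundleEdges K p :=
  fun _ he => ⟨h he.1, he.2⟩

noncomputable def bundleSum [Fintype V] [Fintype E] (H : Piece V E) : ℤ :=
  ∑ᶠ p ∈ {p | ∃ e, G.ends e = p}, G.cconst ^ (G.bundleEdges H p).ncard

lemma lam_eq [Fintype V] [Fintype E] (H : Piece V E) :
    G.lam H = G.cconst ^ H.verts.ncard + G.bundleSum H + G.gap H ^ 2 := rfl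

/-- Edges of one bundle share their endpoints, so they cannot be split between vertex-disjoint
pieces that contain the endpoints of their edges. -/
lemma exists_subset_bundleEdges {I : Set (Piece V E)}
    (hclosed : ∀ t ∈ I, ∀ e ∈ t.edges, ∀ v, v ∈ G.ends e → v ∈ t.verts)
    (hdisj : ∀ t ∈ I, ∀ t' ∈ I, t ≠ t' → Disjoint t.verts t'.verts)
    {p : Sym2 V} {S : Set E} (hSI : S ⊆ ⋃ t ∈ I, t.edges) (hSp : ∀ e ∈ S, G.ends e = p)
    (hS : S.Nonempty) : ∃ t ∈ I, S ⊆ G.bundleEdges t p := by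
  obtain ⟨e₀, he₀⟩ := hS
  obtain ⟨t₀, ht₀, he₀t₀⟩ := Set.mem_iUnion₂.mp (hSI he₀)
  refine ⟨t₀, ht₀, fun e he => ⟨?_, hSp e he⟩⟩
  obtain ⟨t, ht, het⟩ := Set.mem_iUnion₂.mp (hSI he)
  obtain rfl | hne := eq_or_ne t t₀
  · exact het
  · obtain ⟨u, hu⟩ : ∃ u, u ∈ p := ⟨_, Sym2.out_fst_mem p⟩
    have hut : u ∈ t.verts := hclosed t ht e het u (by rwa [hSp e he])
    have hut₀ : u ∈ t₀.verts := hclosed t₀ ht₀ e₀ he₀t₀ u (by rwa [hSp e₀ he₀])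
    exact absurd hut₀ (Set.disjoint_left.mp (hdisj t ht t₀ ht₀ hne) hut)

lemma pow_ncard_le_sum_add_one [Finite E] {c : ℤ} (hc : 1 ≤ c) {I : Finset (Piece V E)}
    (hclosed : ∀ t ∈ I, ∀ e ∈ t.edges, ∀ v, v ∈ G.ends e → v ∈ t.verts)
    (hdisj : ∀ t ∈ I, ∀ t' ∈ I, t ≠ t' → Disjoint t.verts t'.verts)
    {p : Sym2 V} {S : Set E} (hSI : S ⊆ ⋃ t ∈ I, t.edges) (hSp : ∀ e ∈ S, G.ends e = p) :
    c ^ S.ncard ≤ ∑ t ∈ I, c ^ (G.bundleEdges t p).ncard + 1 := by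
  have hsum_nonneg : 0 ≤ ∑ t ∈ I, c ^ (G.bundleEdges t p).ncard :=
    Finset.sum_nonneg fun t _ => by positivity
  obtain rfl | hS := S.eq_empty_or_nonempty
  · simpa using hsum_nonneg
  obtain ⟨t, ht, hSt⟩ := G.exists_subset_bundleEdges hclosed hdisj hSI hSp hS
  calc c ^ S.ncard ≤ c ^ (G.bundleEdges t p).ncard :=
        pow_le_pow_right₀ hc (Set.ncard_le_ncard hSt)
    _ ≤ ∑ t ∈ I, c ^ (G.bundleEdges t p).ncard :=
        Finset.single_le_sum (f := fun t => c ^ (G.bundleEdges t p).ncard)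
          (fun t _ => by positivity) ht
    _ ≤ _ := le_add_of_nonneg_right zero_le_one

section BundleInequality

variable [Finite E] {c : ℤ} {a b vee : Piece V E} {I : Finset (Piece V E)}

lemma pow_bundleEdges_add_le_of_subset (hc : 1 ≤ c)
    (hclosed : ∀ t ∈ I, ∀ e ∈ t.edges, ∀ v, v ∈ G.ends e → v ∈ t.verts)
    (hdisj : ∀ t ∈ I, ∀ t' ∈ I, t ≠ t' → Disjoint t.verts t'.verts)
    (hI : a.edges ∩ b.edges ⊆ ⋃ t ∈ I, t.edges) (hbv : b.edges ⊆ vee.edges)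
    {p : Sym2 V} (hab : G.bundleEdges a p ⊆ b.edges) :
    c ^ (G.bundleEdges a p).ncard + c ^ (G.bundleEdges b p).ncard ≤
      c ^ (G.bundleEdges vee p).ncard + (∑ t ∈ I, c ^ (G.bundleEdges t p).ncard + 1) := by
  rw [add_comm]
  refine add_le_add (pow_le_pow_right₀ hc (Set.ncard_le_ncard (G.bundleEdges_mono hbv p)))
    (G.pow_ncard_le_sum_add_one hc hclosed hdisj ?_ fun e he => he.2)
  exact fun e he => hI ⟨he.1, hab he⟩

lemma pow_bundleEdges_add_le (hc : 1 ≤ c)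
    (hclosed : ∀ t ∈ I, ∀ e ∈ t.edges, ∀ v, v ∈ G.ends e → v ∈ t.verts)
    (hdisj : ∀ t ∈ I, ∀ t' ∈ I, t ≠ t' → Disjoint t.verts t'.verts)
    (hI : a.edges ∩ b.edges ⊆ ⋃ t ∈ I, t.edges)
    (hav : a.edges ⊆ vee.edges) (hbv : b.edges ⊆ vee.edges) {p : Sym2 V}
    (hbc : G.bundleEdges a p ⊆ b.edges ∨ G.bundleEdges b p ⊆ a.edges) :
    c ^ (G.bundleEdges a p).ncard + c ^ (G.bundleEdges b p).ncard ≤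
      c ^ (G.bundleEdges vee p).ncard + (∑ t ∈ I, c ^ (G.bundleEdges t p).ncard + 1) := by
  rcases hbc with hab | hba
  · exact G.pow_bundleEdges_add_le_of_subset hc hclosed hdisj hI hbv hab
  · rw [Set.inter_comm] at hI
    rw [add_comm]
    exact G.pow_bundleEdges_add_le_of_subset hc hclosed hdisj hI hav hba

end BundleInequality

lemma bundleSum_add_le [Fintype V] [Fintype E] (hc : 1 ≤ G.cconst) {a b vee : Piece V E}
    {I : Finset (Piece V E)}
    (hclosed : ∀ t ∈ I, ∀ e ∈ t.edges, ∀ v, v ∈ G.ends e → v ∈ t.verts)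
    (hdisj : ∀ t ∈ I, ∀ t' ∈ I, t ≠ t' → Disjoint t.verts t'.verts)
    (hI : a.edges ∩ b.edges ⊆ ⋃ t ∈ I, t.edges)
    (hav : a.edges ⊆ vee.edges) (hbv : b.edges ⊆ vee.edges)
    (hbc : ∀ p, G.bundleEdges a p ⊆ b.edges ∨ G.bundleEdges b p ⊆ a.edges) :
    G.bundleSum a + G.bundleSum b ≤
      G.bundleSum vee + ∑ t ∈ I, G.bundleSum t + {p | ∃ e, G.ends e = p}.ncard := by
  have hP : {p : Sym2 V | ∃ e, G.ends e = p}.Finite := Set.toFinite _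
  simp only [bundleSum, finsum_mem_eq_finite_toFinset_sum _ hP, Set.ncard_eq_toFinset_card _ hP]
  calc _ = ∑ p ∈ hP.toFinset,
          (G.cconst ^ (G.bundleEdges a p).ncard + G.cconst ^ (G.bundleEdges b p).ncard) :=
        Finset.sum_add_distrib.symm
    _ ≤ ∑ p ∈ hP.toFinset, (G.cconst ^ (G.bundleEdges vee p).ncard +
          (∑ t ∈ I, G.cconst ^ (G.bundleEdges t p).ncard + 1)) :=
        Finset.sum_le_sum fun p _ =>
          G.pow_bundleEdges_add_le hc hclosed hdisj hI hav hbv (hbc p)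
    _ = _ := by
        simp only [Finset.sum_add_distrib, Finset.sum_comm (s := hP.toFinset),
          Finset.sum_const, nsmul_one, add_assoc]

lemma bundleSum_le_lam [Fintype V] [Fintype E] (H : Piece V E) : G.bundleSum H ≤ G.lam H := by
  have hc : 0 ≤ G.cconst := sq_nonneg _
  rw [lam_eq]
  linarith [pow_nonneg hc H.verts.ncard, sq_nonneg (G.gap H)]

end Bundles

theorem lam_inequality_general {V E : Type} [Fintype V] [Fintype E] (G : Pseudograph V E)
    (a b vee : Piece V E) (I : Set (Piece V E))
    (ha : G.IsTube a) (hb : G.IsTube b)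
    (hbc : ∀ p : Sym2 V, {e | e ∈ a.edges ∧ G.ends e = p} ⊆ b.edges ∨
      {e | e ∈ b.edges ∧ G.ends e = p} ⊆ a.edges)
    (hI : (∀ t ∈ I, G.IsTube t) ∧
      (∀ t ∈ I, ∀ t' ∈ I, t ≠ t' → Disjoint t.verts t'.verts) ∧
      (⋃ t ∈ I, t.verts) = a.verts ∩ b.verts ∧
      (⋃ t ∈ I, t.edges) = a.edges ∩ b.edges ∧ I.Finite)
    (hvee : G.IsTube vee ∧ a.Sub vee ∧ b.Sub vee ∧
      ∀ t, G.IsTube t → a.Sub t → b.Sub t → t.Sub vee → t = vee)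
    (hcard : a.verts.ncard < vee.verts.ncard ∧ b.verts.ncard < vee.verts.ncard) :
    G.lam a + G.lam b < G.lam vee + ∑ᶠ t ∈ I, G.lam t := by
  obtain ⟨hItube, hIdisj, -, hIedges, hIfin⟩ := hI
  obtain ⟨-, hav, hbv, -⟩ := hvee
  lift I to Finset (Piece V E) using hIfin
  set N : ℤ := ((Fintype.card V + Fintype.card E : ℕ) : ℤ)
  have hn : 2 ≤ vee.verts.ncard :=
    lt_of_le_of_lt ((Set.ncard_pos (Set.toFinite _)).mpr ha.2.1.1) hcard.1
  have hN : 2 ≤ N := by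
    have := pieceSize_le vee
    unfold pieceSize at this
    omega
  have hc : G.cconst = N ^ 2 := rfl
  have hbundles := G.bundleSum_add_le (by nlinarith)
    (fun t ht => (hItube t ht).1) hIdisj hIedges.ge hav.2 hbv.2 hbc
  have hIlam : ∑ t ∈ I, G.bundleSum t ≤ ∑ t ∈ I, G.lam t :=
    Finset.sum_le_sum fun t _ => G.bundleSum_le_lam t
  have hverts := pow_add_pow_add_lt_pow hN hn hcard.1 hcard.2
  have hP : ({p | ∃ e, G.ends e = p}.ncard : ℤ) ≤ N := by
    have := G.ncard_bundles_le
    simp only [N]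
    omega
  rw [finsum_mem_coe_finset, lam_eq, lam_eq, lam_eq, hc]
  linarith [G.sq_gap_le ha.2.1.1, G.sq_gap_le hb.2.1.1, sq_nonneg (G.gap vee)]

/-- The key inequality (Lemma `inequality`, dominance case): if tubes `G_a` and `G_b` are
bundle compatible and adjacent or properly intersecting, their intersection is the
disjoint set of tubes `I`, `G_∨` is a minimal tube containing both, and `|V(∨)|` strictly
exceeds `|V(a)|` and `|V(b)|`, then `Λ(G_a) + Λ(G_b) < Λ(G_∨) + Σ_i Λ(G_{∧_i})`. -/
theorem lam_inequality {V E : Type} [Fintype V] [Fintype E] (G : Pseudograph V E)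
    (hloop : ∀ e, ¬ (G.ends e).IsDiag)
    (a b vee : Piece V E) (I : Set (Piece V E))
    (ha : G.IsTube a) (hb : G.IsTube b)
    (hbc : ∀ p : Sym2 V, {e | e ∈ a.edges ∧ G.ends e = p} ⊆ b.edges ∨
      {e | e ∈ b.edges ∧ G.ends e = p} ⊆ a.edges)
    (hrel : ¬ a.Sub b ∧ ¬ b.Sub a ∧
      ((a.verts ∩ b.verts).Nonempty ∨
        ∃ e, ∃ u ∈ a.verts, ∃ w ∈ b.verts, G.ends e = s(u, w)))
    (hI : (∀ t ∈ I, G.IsTube t) ∧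
      (∀ t ∈ I, ∀ t' ∈ I, t ≠ t' → Disjoint t.verts t'.verts) ∧
      (⋃ t ∈ I, t.verts) = a.verts ∩ b.verts ∧
      (⋃ t ∈ I, t.edges) = a.edges ∩ b.edges ∧ I.Finite)
    (hvee : G.IsTube vee ∧ a.Sub vee ∧ b.Sub vee ∧
      ∀ t, G.IsTube t → a.Sub t → b.Sub t → t.Sub vee → t = vee)
    (hcard : a.verts.ncard < vee.verts.ncard ∧ b.verts.ncard < vee.verts.ncard) :
    G.lam a + G.lam b < G.lam vee + ∑ᶠ t ∈ I, G.lam t :=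
  lam_inequality_general G a b vee I ha hb hbc hI hvee hcard

end Pseudograph
end
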